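/- Let k be a commutative ring, X a simplicial unbounded chain complex over k, and n ≥ 1. For 0 ≤ r ≤ n−1 define the subcomplex s_{[r]}X_{n−1} := Σ_{0 ≤ i ≤ r} im(sᵢ : X_{n−1} → Xₙ) ⊆ Xₙ, so that s_{[0]}X_{n−1} ≅ X_{n−1} and s_{[n−1]}X_{n−1} = DXₙ. Then for 0 ≤ r ≤ n−1, the degeneracy s_{r+1} : Xₙ → X_{n+1} carries s_{[r]}X_{n−1} into s_{[r]}Xₙ, and the commutative square with top map s_{r+1} : s_{[r]}X_{n−1} → s_{[r]}Xₙ, left map the inclusion s_{[r]}X_{n−1} ⊆ Xₙ, right map the inclusion s_{[r]}Xₙ ⊆ s_{[r+1]}Xₙ, and bottom map s_{r+1} : Xₙ → s_{[r+1]}Xₙ, is a pushout square in Ch_k; moreover all four maps in this square are monomorphisms. -/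

import Mathlib

open CategoryTheory CategoryTheory.Limits Opposite

variable (k : Type) [CommRing k]

/-- The subobject `s_{[r]}Xₙ = Σ_{0 ≤ i ≤ r} im(sᵢ : Xₙ ⟶ Xₙ₊₁)` of `Xₙ₊₁`, for a simplicial
unbounded chain complex `X` over `k`.  Here `n` is the index `m` below, so this is a subobject
of `X _[m+1]`, and we require `r + 1 ≤ m + 1`. -/
noncomputable def sSub (X : SimplicialObject (ChainComplex (ModuleCat.{0} k) ℤ)) (m r : ℕ)
    (h : r + 1 ≤ m + 1) : Subobject (X.obj (op (SimplexCategory.mk (m + 1)))) :=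
  Finset.univ.sup fun i : Fin (r + 1) => imageSubobject (X.σ (Fin.castLE h i))

/-! The degeneracy `s_{r+1}` carries `s_{[r]}X_{n-1}` into `s_{[r]}X_n` because
`s_{r+1} s_i = s_i s_r` for `i ≤ r`. Conversely the face `d_{r+2}`, a retraction of `s_{r+1}`,
carries `s_{[r]}X_n` back into `s_{[r]}X_{n-1}` because `d_{r+2} s_i = s_i d_{r+1}`, so
`s_{[r]}X_{n-1}` is exactly the preimage of `s_{[r]}X_n` under `s_{r+1}`: the square is a
pullback. Since `s_{[r+1]}X_n = s_{[r]}X_n + im s_{r+1}`, its two legs jointly cover the corner,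
and in an abelian category such a pullback square of monomorphisms is also a pushout. -/

namespace CategoryTheory.Subobject

variable {C : Type*} [Category C]

section Pullback

variable [HasPullbacks C]

lemma le_pullback_iff_factors {X Y : C} (g : X ⟶ Y) (S : Subobject X) (T : Subobject Y) :
    S ≤ (pullback g).obj T ↔ T.Factors (S.arrow ≫ g) :=
  ⟨fun h => (pullback_factors_iff g T S.arrow).1 (factors_of_le _ h S.factors_self),
    fun h => le_of_factors (pullback_factors g T S.arrow h)⟩

lemma imageSubobject_le_pullback {W X Y : C} (f : W ⟶ X) [HasImage f] (g : X ⟶ Y)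
    (T : Subobject Y) (h : T.Factors (f ≫ g)) : imageSubobject f ≤ (pullback g).obj T :=
  imageSubobject_le f _ (factorThru_arrow _ _ (pullback_factors g T f h))

lemma pullback_le_of_comp_eq_id {X Y : C} {σ : X ⟶ Y} {δ : Y ⟶ X} (hσδ : σ ≫ δ = 𝟙 X)
    {A : Subobject Y} {P : Subobject X} (hA : P.Factors (A.arrow ≫ δ)) :
    (pullback σ).obj A ≤ P := by
  have hfac := (le_pullback_iff_factors σ _ A).1 le_rfl
  have harrow : ((pullback σ).obj A).arrow = A.factorThru _ hfac ≫ A.arrow ≫ δ := by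
    rw [factorThru_arrow_assoc, Category.assoc, hσδ, Category.comp_id]
  exact le_of_factors (harrow ▸ factors_of_factors_right _ hA)

lemma isPullback_ofLE_of_pullback_le {X Y : C} {P : Subobject X} {A B : Subobject Y}
    (hAB : A ≤ B) {σ : X ⟶ Y} {t : (P : C) ⟶ A} {b : X ⟶ B}
    (ht : t ≫ A.arrow = P.arrow ≫ σ) (hb : b ≫ B.arrow = σ)
    (hP : (pullback σ).obj A ≤ P) :
    IsPullback t P.arrow (ofLE A B hAB) b := by
  have w : t ≫ ofLE A B hAB = P.arrow ≫ b := by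
    rw [← cancel_mono B.arrow]; simp [ht, hb]
  have hfac (s : PullbackCone (ofLE A B hAB) b) : P.Factors s.snd := by
    refine factors_of_le _ hP (pullback_factors σ A s.snd ?_)
    rw [← hb, ← Category.assoc, ← s.condition, Category.assoc, ofLE_arrow]
    exact factors_comp_arrow _
  refine IsPullback.of_isLimit (PullbackCone.IsLimit.mk w (fun s => P.factorThru s.snd (hfac s))
    (fun s => ?_) (fun s => factorThru_arrow _ _ _) (fun s m _ hm => ?_))
  · rw [← cancel_mono (ofLE A B hAB), Category.assoc, w, factorThru_arrow_assoc, s.condition]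
  · rw [← cancel_mono P.arrow, factorThru_arrow, hm]

end Pullback

/- The comparison map `k` from the pushout to `B` is mono because the square is a pullback, and
split epi because `A` and the image of `σ` cover `B`. -/
lemma isPushout_ofLE_of_pullback_le [Abelian C] {X Y : C} {P : Subobject X}
    {A B : Subobject Y} (hAB : A ≤ B) {σ : X ⟶ Y} {t : (P : C) ⟶ A} {b : X ⟶ B}
    (ht : t ≫ A.arrow = P.arrow ≫ σ) (hb : b ≫ B.arrow = σ)
    (hP : (pullback σ).obj A ≤ P) (hB : B ≤ A ⊔ imageSubobject σ) :
    IsPushout t P.arrow (ofLE A B hAB) b := by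
  have hpb := isPullback_ofLE_of_pullback_le hAB ht hb hP
  let k := pushout.desc (ofLE A B hAB) b hpb.w
  have hkl : pushout.inl _ _ ≫ k = ofLE A B hAB := pushout.inl_desc _ _ _
  have hkr : pushout.inr _ _ ≫ k = b := pushout.inr_desc _ _ _
  have : Mono k :=
    (IsPushout.of_hasPushout t P.arrow).mono_of_isPullback_of_mono hpb k hkl hkr
  have hk : B ≤ Subobject.mk (k ≫ B.arrow) :=
    hB.trans (sup_le (le_of_factors ⟨pushout.inl _ _, by simp [reassoc_of% hkl]⟩)
      (imageSubobject_le_mk _ σ (pushout.inr _ _) (by simp [reassoc_of% hkr, hb])))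
  obtain ⟨s, hs⟩ : ∃ s : (B : C) ⟶ pushout t P.arrow, s ≫ k ≫ B.arrow = B.arrow :=
    factors_of_le _ hk B.factors_self
  have : IsSplitEpi k := IsSplitEpi.mk' ⟨s, by
    rw [← cancel_mono B.arrow, Category.assoc, hs, Category.id_comp]⟩
  have : IsIso k := isIso_of_mono_of_epi k
  exact (IsPushout.of_hasPushout t P.arrow).of_iso (Iso.refl _) (Iso.refl _) (Iso.refl _)
    (asIso k) (by simp) (by simp) (by simpa using hkl) (by simpa using hkr)

end CategoryTheory.Subobject

section Degeneracies

open Subobject Simplicial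

variable {k} (X : SimplicialObject (ChainComplex (ModuleCat.{0} k) ℤ))

lemma sSub_factors_comp_σ {m r : ℕ} (h : r + 1 ≤ m + 1) {j : Fin (m + 1)} (hj : (j : ℕ) ≤ r)
    {Z : ChainComplex (ModuleCat.{0} k) ℤ} (g : Z ⟶ X _⦋m⦌) :
    (sSub k X m r h).Factors (g ≫ X.σ j) :=
  finset_sup_factors ⟨⟨j, by omega⟩, Finset.mem_univ _, imageSubobject_factors_comp_self _ g⟩

lemma sSub_factors_arrow_comp_σ {m r : ℕ} (hr : r ≤ m) :
    (sSub k X (m + 1) r (Nat.le_succ_of_le (Nat.add_le_add_right hr 1))).Factors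
      ((sSub k X m r (Nat.add_le_add_right hr 1)).arrow ≫
        X.σ ⟨r + 1, Nat.add_lt_add_right (Nat.lt_succ_of_le hr) 1⟩) := by
  rw [← le_pullback_iff_factors]
  refine Finset.sup_le fun i _ => ?_
  apply imageSubobject_le_pullback
  have hσσ := X.σ_comp_σ (n := m) (i := Fin.castLE (by omega) i) (j := ⟨r, by omega⟩)
    (Fin.is_le i)
  rw [Fin.succ_mk] at hσσ
  rw [← hσσ]
  exact sSub_factors_comp_σ X _ (by simpa using Fin.is_le i) _

lemma sSub_factors_arrow_comp_δ {m r : ℕ} (hr : r ≤ m) :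
    (sSub k X m r (Nat.add_le_add_right hr 1)).Factors
      ((sSub k X (m + 1) r (Nat.le_succ_of_le (Nat.add_le_add_right hr 1))).arrow ≫
        X.δ ⟨r + 2, Nat.add_lt_add_right (Nat.lt_succ_of_le hr) 2⟩) := by
  rw [← le_pullback_iff_factors]
  refine Finset.sup_le fun i _ => ?_
  apply imageSubobject_le_pullback
  rw [X.δ_comp_σ_of_gt' (n := m) (i := ⟨r + 2, by omega⟩) (j := Fin.castLE (by omega) i)
    (by simp [Fin.lt_def]; omega)]
  exact sSub_factors_comp_σ X _ (by simpa using Fin.is_le i) _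

lemma sSub_succ_le_sup {m r : ℕ} (h : r + 2 ≤ m + 1) :
    sSub k X m (r + 1) h ≤
      sSub k X m r (Nat.le_of_succ_le h) ⊔ imageSubobject (X.σ ⟨r + 1, h⟩) := by
  refine Finset.sup_le fun i _ => ?_
  induction i using Fin.lastCases with
  | last => exact le_sup_right
  | cast i => exact le_sup_of_le_left (Finset.le_sup (f := fun i : Fin (r + 1) =>
      imageSubobject (X.σ (Fin.castLE _ i))) (Finset.mem_univ i))

end Degeneracies

/-- Let `X` be a simplicial unbounded chain complex over a commutative ring
`k`, `n = m + 1 ≥ 1` and `0 ≤ r ≤ n − 1 = m`.  The degeneracy `s_{r+1} : Xₙ ⟶ Xₙ₊₁` carries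
`s_{[r]}X_{n−1}` into `s_{[r]}Xₙ`, and the square with top the restricted `s_{r+1}`, left the
inclusion `s_{[r]}X_{n−1} ⊆ Xₙ`, right the inclusion `s_{[r]}Xₙ ⊆ s_{[r+1]}Xₙ`, and bottom
the corestricted `s_{r+1} : Xₙ ⟶ s_{[r+1]}Xₙ`, is a pushout square in `Ch_k`, all of whose
maps are monomorphisms. -/
theorem degeneracy_pushout_square
    (X : SimplicialObject (ChainComplex (ModuleCat.{0} k) ℤ)) (m r : ℕ) (hr : r ≤ m)
    (hle : sSub k X (m + 1) r (by omega) ≤ sSub k X (m + 1) (r + 1) (by omega)) :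
    (∃ t : ((sSub k X m r (by omega) : Subobject _) : ChainComplex (ModuleCat.{0} k) ℤ) ⟶
        ((sSub k X (m + 1) r (by omega) : Subobject _) : ChainComplex (ModuleCat.{0} k) ℤ),
      t ≫ (sSub k X (m + 1) r (by omega)).arrow =
        (sSub k X m r (by omega)).arrow ≫ X.σ ⟨r + 1, by omega⟩) ∧
    (∀ (t : ((sSub k X m r (by omega) : Subobject _) : ChainComplex (ModuleCat.{0} k) ℤ) ⟶
        ((sSub k X (m + 1) r (by omega) : Subobject _) : ChainComplex (ModuleCat.{0} k) ℤ))
      (_ : t ≫ (sSub k X (m + 1) r (by omega)).arrow =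
        (sSub k X m r (by omega)).arrow ≫ X.σ ⟨r + 1, by omega⟩)
      (b : X.obj (op (SimplexCategory.mk (m + 1))) ⟶
        ((sSub k X (m + 1) (r + 1) (by omega) : Subobject _) : ChainComplex (ModuleCat.{0} k) ℤ))
      (_ : b ≫ (sSub k X (m + 1) (r + 1) (by omega)).arrow = X.σ ⟨r + 1, by omega⟩),
      IsPushout t (sSub k X m r (by omega)).arrow
          (Subobject.ofLE _ _ hle) b ∧
        Mono t ∧ Mono (sSub k X m r (by omega)).arrow ∧
        Mono (Subobject.ofLE (sSub k X (m + 1) r (by omega))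
          (sSub k X (m + 1) (r + 1) (by omega)) hle) ∧ Mono b) := by
  have hσδ : X.σ (⟨r + 1, by omega⟩ : Fin (m + 2)) ≫ X.δ (⟨r + 2, by omega⟩ : Fin (m + 3)) =
      𝟙 _ := X.δ_comp_σ_succ' rfl
  have : IsSplitMono (X.σ (⟨r + 1, by omega⟩ : Fin (m + 2))) := .mk' ⟨_, hσδ⟩
  refine ⟨⟨_, Subobject.factorThru_arrow _ _ (sSub_factors_arrow_comp_σ X hr)⟩,
    fun t ht b hb => ⟨?_, mono_of_mono_fac ht, inferInstance, inferInstance, mono_of_mono_fac hb⟩⟩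
  exact Subobject.isPushout_ofLE_of_pullback_le hle ht hb
    (Subobject.pullback_le_of_comp_eq_id hσδ (sSub_factors_arrow_comp_δ X hr))
    (sSub_succ_le_sup X (by omega))
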